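/- For every n ≥ 1 and every ε ∈ 2^ω, the graph G_ε is B_n-free. -/
import Mathlib


open SimpleGraph

/-- `H` is isomorphic to a (not necessarily induced) subgraph of `G`:
    there is an injective graph homomorphism from `H` to `G`. -/
def IsSubgraphOf {V W : Type*} (H : SimpleGraph V) (G : SimpleGraph W) : Prop :=
  ∃ f : H →g G, Function.Injective f

/-- `G` is `F`-free: no subgraph of `G` (not necessarily induced) is isomorphic to `F`. -/
def GraphFree {V W : Type*} (F : SimpleGraph V) (G : SimpleGraph W) : Prop :=
  ¬ IsSubgraphOf F G

/-- The `n`-bridge `B_n`. Vertices: `0 = a`, `1 = b`, `2 = c`,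
    `3,…,n+2 = x₁,…,xₙ`, `n+3 = d`, `n+4 = e`.  Edges: `(a,c)`, `(b,c)`,
    `(c,x₁)`, `(xᵢ,xᵢ₊₁)` for `1 ≤ i < n`, `(xₙ,d)`, `(xₙ,e)`. -/
def Bridge (n : ℕ) : SimpleGraph (Fin (n + 5)) :=
  SimpleGraph.fromRel (fun u v =>
    ((u : ℕ) = 0 ∧ (v : ℕ) = 2) ∨ ((u : ℕ) = 1 ∧ (v : ℕ) = 2) ∨
    (2 ≤ (u : ℕ) ∧ (u : ℕ) < n + 2 ∧ (v : ℕ) = (u : ℕ) + 1) ∨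
    ((u : ℕ) = n + 2 ∧ (v : ℕ) = n + 3) ∨ ((u : ℕ) = n + 2 ∧ (v : ℕ) = n + 4))

/-- Core of a drive through (without its exits): the vertices of `K_{n+2}` and, for each
    of the `n` middle vertices, a copy of a dead end minus its top vertex `p_{n+1}`. -/
abbrev TCore (n : ℕ) := Fin (n + 2) ⊕ (Fin n × Fin (2 * n + 3))

/-- Vertex set of the graph `G_ε`:
    * `Sum.inl u`  — the dead end `D^ε` (vertices `0,…,2n+3`, where `0,…,n+2` is the
      `K_{n+3}` with `k_{n+3} = p₀ = n+2`, and `2n+3 = p_{n+1}` is the left exit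
      `l^ε(0)` of the first drive through);
    * `Sum.inr (Sum.inl (m, c))` — the core of the `m`-th drive through `T^ε(m)`;
    * `Sum.inr (Sum.inr ⟨m, c⟩)` — the `m`-th connecting path: the right exit
      `r^ε(m)` (`c = 0`), the interior of the highway `H^ε(m)` of length `n-1+ε(m)`,
      and the left exit `l^ε(m+1)` (`c = n + ε(m) - 1`); when `n = 1` and `ε(m) = 0`
      this path consists of a single vertex `r^ε(m) = l^ε(m+1)`, realizing the
      required identification. -/
abbrev GV (n : ℕ) (ε : ℕ → Bool) :=
  Fin (2 * n + 4) ⊕ (ℕ × TCore n) ⊕ ((m : ℕ) × Fin (n + (ε m).toNat))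

/-- Edges inside the core of a drive through: `K_{n+2}` is complete, each dead-end
    copy carries the dead-end edges, and the vertex `pₙ = 2n+2` of the `i`-th copy is
    joined to `k_{i+1}` (since `p_{n+1}` of that copy is identified with `k_{i+1}`). -/
def TRel (n : ℕ) : TCore n → TCore n → Prop
  | .inl u, .inl v => u ≠ v
  | .inr (i, x), .inr (i', y) => i = i' ∧
      (((x : ℕ) < n + 3 ∧ (y : ℕ) < n + 3 ∧ x ≠ y) ∨
       (n + 2 ≤ (x : ℕ) ∧ (x : ℕ) < 2 * n + 2 ∧ (y : ℕ) = (x : ℕ) + 1))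
  | .inr (i, x), .inl j => (x : ℕ) = 2 * n + 2 ∧ (j : ℕ) = (i : ℕ) + 1
  | _, _ => False

/-- The graph `G_ε`: the dead end `D^ε` whose `p_{n+1}` is the left exit `l^ε(0)`
    joined to `k₁` of `T^ε(0)`; the drive throughs `T^ε(m)`; and for each `m` the
    highway `H^ε(m)` of length `n - 1 + ε(m)` joining the right exit `r^ε(m)`
    (adjacent to `k_{n+2}` of `T^ε(m)`) to the left exit `l^ε(m+1)` (adjacent to `k₁`
    of `T^ε(m+1)`), where `r^ε(m) = l^ε(m+1)` when `n = 1` and `ε(m) = 0`. -/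
def GEps (n : ℕ) (ε : ℕ → Bool) : SimpleGraph (GV n ε) :=
  SimpleGraph.fromRel (fun a b =>
    match a, b with
    | .inl u, .inl v =>
        ((u : ℕ) < n + 3 ∧ (v : ℕ) < n + 3 ∧ u ≠ v) ∨
        (n + 2 ≤ (u : ℕ) ∧ (u : ℕ) < 2 * n + 3 ∧ (v : ℕ) = (u : ℕ) + 1)
    | .inl u, .inr (.inl (m, .inl j)) => (u : ℕ) = 2 * n + 3 ∧ m = 0 ∧ (j : ℕ) = 0
    | .inr (.inl (m, c)), .inr (.inl (m', c')) => m = m' ∧ TRel n c c'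
    | .inr (.inl (m, .inl j)), .inr (.inr ⟨m', c⟩) =>
        (j : ℕ) = n + 1 ∧ m' = m ∧ (c : ℕ) = 0
    | .inr (.inr ⟨m, c⟩), .inr (.inr ⟨m', c'⟩) => m' = m ∧ (c' : ℕ) = (c : ℕ) + 1
    | .inr (.inr ⟨m, c⟩), .inr (.inl (m', .inl j)) =>
        (c : ℕ) = n + (ε m).toNat - 1 ∧ m' = m + 1 ∧ (j : ℕ) = 0
    | _, _ => False)

namespace BFree

def GRel (n : ℕ) (ε : ℕ → Bool) : GV n ε → GV n ε → Prop := fun a b =>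
    match a, b with
    | .inl u, .inl v =>
        ((u : ℕ) < n + 3 ∧ (v : ℕ) < n + 3 ∧ u ≠ v) ∨
        (n + 2 ≤ (u : ℕ) ∧ (u : ℕ) < 2 * n + 3 ∧ (v : ℕ) = (u : ℕ) + 1)
    | .inl u, .inr (.inl (m, .inl j)) => (u : ℕ) = 2 * n + 3 ∧ m = 0 ∧ (j : ℕ) = 0
    | .inr (.inl (m, c)), .inr (.inl (m', c')) => m = m' ∧ TRel n c c'
    | .inr (.inl (m, .inl j)), .inr (.inr ⟨m', c⟩) =>
        (j : ℕ) = n + 1 ∧ m' = m ∧ (c : ℕ) = 0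
    | .inr (.inr ⟨m, c⟩), .inr (.inr ⟨m', c'⟩) => m' = m ∧ (c' : ℕ) = (c : ℕ) + 1
    | .inr (.inr ⟨m, c⟩), .inr (.inl (m', .inl j)) =>
        (c : ℕ) = n + (ε m).toNat - 1 ∧ m' = m + 1 ∧ (j : ℕ) = 0
    | _, _ => False

lemma geps_eq (n : ℕ) (ε : ℕ → Bool) : GEps n ε = SimpleGraph.fromRel (GRel n ε) := rfl

lemma adj_iff {n : ℕ} {ε : ℕ → Bool} {w z : GV n ε} :
    (GEps n ε).Adj w z ↔ w ≠ z ∧ (GRel n ε w z ∨ GRel n ε z w) := by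
  rw [geps_eq]; exact SimpleGraph.fromRel_adj _ _ _

/-- Clique identifiers. -/
inductive CId : Type where
  | dcl : CId
  | tcl (m : ℕ) : CId
  | ecl (m i : ℕ) : CId
  deriving DecidableEq

/-- Corridor identifiers. -/
inductive CorId : Type where
  | dt : CorId
  | et (m i : ℕ) : CorId
  | hw (m : ℕ) : CorId
  deriving DecidableEq

variable (n : ℕ) (ε : ℕ → Bool)

/-- Position of a vertex: either in a clique, or at position `t ≥ 1` inside a corridor. -/
def pos : GV n ε → CId ⊕ (CorId × ℕ)
  | .inl u => if (u : ℕ) ≤ n + 2 then .inl .dcl else .inr (.dt, (u : ℕ) - (n + 2))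
  | .inr (.inl (_m, .inl _)) => .inl (.tcl _m)
  | .inr (.inl (_m, .inr (i, x))) =>
      if (x : ℕ) ≤ n + 2 then .inl (.ecl _m i) else .inr (.et _m i, (x : ℕ) - (n + 2))
  | .inr (.inr c) => .inr (.hw c.1, (c.2 : ℕ) + 1)

/-- Length of a corridor. -/
def clen : CorId → ℕ
  | .dt => n + 2
  | .et _ _ => n + 1
  | .hw m => n + 1 + (ε m).toNat

/-- Index of a vertex within its clique. -/
def cidx : GV n ε → ℕ
  | .inl u => u
  | .inr (.inl (_, .inl j)) => j
  | .inr (.inl (_, .inr (_, x))) => x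
  | .inr (.inr c) => c.2

lemma clen_ge (C : CorId) : n + 1 ≤ clen n ε C := by
  cases C <;> simp only [clen] <;> omega

lemma pos_bounds {w : GV n ε} {C t} (h : pos n ε w = .inr (C, t)) :
    1 ≤ t ∧ t ≤ clen n ε C - 1 := by
  rcases w with u | ⟨m, j | ⟨i, x⟩⟩ | ⟨m, c⟩ <;> simp only [pos] at h
  · split at h
    · exact absurd h (by simp)
    · simp only [Sum.inr.injEq, Prod.mk.injEq] at h
      obtain ⟨rfl, rfl⟩ := h
      have := u.isLt; simp only [clen]; omega
  · exact absurd h (by simp)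
  · split at h
    · exact absurd h (by simp)
    · simp only [Sum.inr.injEq, Prod.mk.injEq] at h
      obtain ⟨rfl, rfl⟩ := h
      have := x.isLt; simp only [clen]; omega
  · simp only [Sum.inr.injEq, Prod.mk.injEq] at h
    obtain ⟨rfl, rfl⟩ := h
    have := c.isLt; simp only [clen]; omega

lemma posA1 {u : Fin (2*n+4)} {Q} (h : pos n ε (.inl u) = .inl Q) :
    Q = .dcl ∧ (u : ℕ) ≤ n + 2 := by
  simp only [pos] at h; split at h
  · exact ⟨(Sum.inl.inj h).symm, by assumption⟩
  · simp at h

lemma posA2 {u : Fin (2*n+4)} {C t} (h : pos n ε (.inl u) = .inr (C, t)) :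
    C = .dt ∧ n + 3 ≤ (u : ℕ) ∧ t = (u : ℕ) - (n + 2) := by
  simp only [pos] at h; split at h
  · simp at h
  · simp only [Sum.inr.injEq, Prod.mk.injEq] at h
    exact ⟨h.1.symm, by omega, h.2.symm⟩

lemma posB1 {m} {j : Fin (n+2)} {Q} (h : pos n ε (.inr (.inl (m, .inl j))) = .inl Q) :
    Q = .tcl m := (Sum.inl.inj h).symm

lemma posB2 {m} {j : Fin (n+2)} {C t} (h : pos n ε (.inr (.inl (m, .inl j))) = .inr (C, t)) :
    False := by simp [pos] at h

lemma posC1 {m} {i : Fin n} {x : Fin (2*n+3)} {Q}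
    (h : pos n ε (.inr (.inl (m, .inr (i, x)))) = .inl Q) :
    Q = .ecl m i ∧ (x : ℕ) ≤ n + 2 := by
  simp only [pos] at h; split at h
  · exact ⟨(Sum.inl.inj h).symm, by assumption⟩
  · simp at h

lemma posC2 {m} {i : Fin n} {x : Fin (2*n+3)} {C t}
    (h : pos n ε (.inr (.inl (m, .inr (i, x)))) = .inr (C, t)) :
    C = .et m i ∧ n + 3 ≤ (x : ℕ) ∧ t = (x : ℕ) - (n + 2) := by
  simp only [pos] at h; split at h
  · simp at h
  · simp only [Sum.inr.injEq, Prod.mk.injEq] at h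
    exact ⟨h.1.symm, by omega, h.2.symm⟩

lemma posD1 {m} {c : Fin (n + (ε m).toNat)} {Q}
    (h : pos n ε (.inr (.inr ⟨m, c⟩)) = .inl Q) : False := by simp [pos] at h

lemma posD2 {m} {c : Fin (n + (ε m).toNat)} {C t}
    (h : pos n ε (.inr (.inr ⟨m, c⟩)) = .inr (C, t)) :
    C = .hw m ∧ t = (c : ℕ) + 1 := by
  simp only [pos] at h
  simp only [Sum.inr.injEq, Prod.mk.injEq] at h
  exact ⟨h.1.symm, h.2.symm⟩

lemma pos_inj {w w' : GV n ε} {C t} (h : pos n ε w = .inr (C, t))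
    (h' : pos n ε w' = .inr (C, t)) : w = w' := by
  rcases w with u | ⟨m, j | ⟨i, x⟩⟩ | ⟨m, c⟩
  · obtain ⟨hC, hu, ht⟩ := posA2 n ε h
    rcases w' with u' | ⟨m', j' | ⟨i', x'⟩⟩ | ⟨m', c'⟩
    · obtain ⟨hC', hu', ht'⟩ := posA2 n ε h'
      exact congrArg Sum.inl (Fin.ext (by omega))
    · exact absurd h' (fun hh => posB2 n ε hh)
    · obtain ⟨hC', _, _⟩ := posC2 n ε h'
      rw [hC] at hC'; exact absurd hC' (by simp)
    · obtain ⟨hC', _⟩ := posD2 n ε h'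
      rw [hC] at hC'; exact absurd hC' (by simp)
  · exact absurd h (fun hh => posB2 n ε hh)
  · obtain ⟨hC, hx, ht⟩ := posC2 n ε h
    rcases w' with u' | ⟨m', j' | ⟨i', x'⟩⟩ | ⟨m', c'⟩
    · obtain ⟨hC', _, _⟩ := posA2 n ε h'
      rw [hC] at hC'; exact absurd hC' (by simp)
    · exact absurd h' (fun hh => posB2 n ε hh)
    · obtain ⟨hC', hx', ht'⟩ := posC2 n ε h'
      rw [hC] at hC'
      simp only [CorId.et.injEq] at hC'
      obtain ⟨rfl, hii⟩ := hC'
      have : i = i' := Fin.ext hii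
      subst this
      have : x = x' := Fin.ext (by omega)
      subst this; rfl
    · obtain ⟨hC', _⟩ := posD2 n ε h'
      rw [hC] at hC'; exact absurd hC' (by simp)
  · obtain ⟨hC, ht⟩ := posD2 n ε h
    rcases w' with u' | ⟨m', j' | ⟨i', x'⟩⟩ | ⟨m', c'⟩
    · obtain ⟨hC', _, _⟩ := posA2 n ε h'
      rw [hC] at hC'; exact absurd hC' (by simp)
    · exact absurd h' (fun hh => posB2 n ε hh)
    · obtain ⟨hC', _, _⟩ := posC2 n ε h'
      rw [hC] at hC'; exact absurd hC' (by simp)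
    · obtain ⟨hC', ht'⟩ := posD2 n ε h'
      rw [hC] at hC'
      simp only [CorId.hw.injEq] at hC'
      subst hC'
      have : c = c' := Fin.ext (by omega)
      subst this; rfl

lemma cidx_lt_dcl {w : GV n ε} (h : pos n ε w = .inl .dcl) : cidx n ε w < n + 3 := by
  rcases w with u | ⟨m, j | ⟨i, x⟩⟩ | ⟨m, c⟩
  · obtain ⟨_, hu⟩ := posA1 n ε h; simp only [cidx]; omega
  · exact absurd (posB1 n ε h) (by simp)
  · obtain ⟨hQ, _⟩ := posC1 n ε h; exact absurd hQ (by simp)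
  · exact absurd h (fun hh => posD1 n ε hh)

lemma cidx_lt_tcl {m} {w : GV n ε} (h : pos n ε w = .inl (.tcl m)) : cidx n ε w < n + 2 := by
  rcases w with u | ⟨m', j | ⟨i, x⟩⟩ | ⟨m', c⟩
  · obtain ⟨hQ, _⟩ := posA1 n ε h; exact absurd hQ (by simp)
  · simpa only [cidx] using j.isLt
  · obtain ⟨hQ, _⟩ := posC1 n ε h; exact absurd hQ (by simp)
  · exact absurd h (fun hh => posD1 n ε hh)

lemma cidx_lt_ecl {m i} {w : GV n ε} (h : pos n ε w = .inl (.ecl m i)) : cidx n ε w < n + 3 := by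
  rcases w with u | ⟨m', j | ⟨i', x⟩⟩ | ⟨m', c⟩
  · obtain ⟨hQ, _⟩ := posA1 n ε h; exact absurd hQ (by simp)
  · exact absurd (posB1 n ε h) (by simp)
  · obtain ⟨_, hx⟩ := posC1 n ε h; simp only [cidx]; omega
  · exact absurd h (fun hh => posD1 n ε hh)

lemma cidx_inj {Q : CId} {w w' : GV n ε} (h : pos n ε w = .inl Q) (h' : pos n ε w' = .inl Q)
    (hc : cidx n ε w = cidx n ε w') : w = w' := by
  rcases w with u | ⟨m, j | ⟨i, x⟩⟩ | ⟨m, c⟩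
  · obtain ⟨hQ, hu⟩ := posA1 n ε h
    rcases w' with u' | ⟨m', j' | ⟨i', x'⟩⟩ | ⟨m', c'⟩
    · exact congrArg Sum.inl (Fin.ext hc)
    · rw [posB1 n ε h'] at hQ; exact absurd hQ (by simp)
    · obtain ⟨hQ', _⟩ := posC1 n ε h'; rw [hQ'] at hQ; exact absurd hQ (by simp)
    · exact absurd h' (fun hh => posD1 n ε hh)
  · have hQ := posB1 n ε h
    rcases w' with u' | ⟨m', j' | ⟨i', x'⟩⟩ | ⟨m', c'⟩
    · obtain ⟨hQ', _⟩ := posA1 n ε h'; rw [hQ'] at hQ; exact absurd hQ (by simp)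
    · have hQ' := posB1 n ε h'
      rw [hQ'] at hQ
      simp only [CId.tcl.injEq] at hQ
      subst hQ
      have : j = j' := Fin.ext hc
      subst this; rfl
    · obtain ⟨hQ', _⟩ := posC1 n ε h'; rw [hQ'] at hQ; exact absurd hQ (by simp)
    · exact absurd h' (fun hh => posD1 n ε hh)
  · obtain ⟨hQ, hx⟩ := posC1 n ε h
    rcases w' with u' | ⟨m', j' | ⟨i', x'⟩⟩ | ⟨m', c'⟩
    · obtain ⟨hQ', _⟩ := posA1 n ε h'; rw [hQ'] at hQ; exact absurd hQ (by simp)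
    · rw [posB1 n ε h'] at hQ; exact absurd hQ (by simp)
    · obtain ⟨hQ', _⟩ := posC1 n ε h'
      rw [hQ'] at hQ
      simp only [CId.ecl.injEq] at hQ
      obtain ⟨rfl, hii⟩ := hQ
      have : i = i' := Fin.ext (by omega)
      subst this
      have : x = x' := Fin.ext hc
      subst this; rfl
    · exact absurd h' (fun hh => posD1 n ε hh)
  · exact absurd h (fun hh => posD1 n ε hh)

/-- End of a corridor on the `A` side. -/
def endA : CorId → GV n ε
  | .dt => .inl ⟨n + 2, by omega⟩
  | .et m i => if h : i < n then .inr (.inl (m, .inr (⟨i, h⟩, ⟨n + 2, by omega⟩)))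
      else .inl ⟨0, by omega⟩
  | .hw m => .inr (.inl (m, .inl ⟨n + 1, by omega⟩))

/-- End of a corridor on the `B` side. -/
def endB : CorId → GV n ε
  | .dt => .inr (.inl (0, .inl ⟨0, by omega⟩))
  | .et m i => if h : i < n then .inr (.inl (m, .inl ⟨i + 1, by omega⟩))
      else .inl ⟨0, by omega⟩
  | .hw m => .inr (.inl (m + 1, .inl ⟨0, by omega⟩))

lemma interior_adj {w z : GV n ε} {C t} (hw : pos n ε w = .inr (C, t))
    (h : (GEps n ε).Adj w z) :
    (∃ t', pos n ε z = .inr (C, t') ∧ (t' = t + 1 ∨ t = t' + 1)) ∨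
    (t = 1 ∧ z = endA n ε C) ∨ (t = clen n ε C - 1 ∧ z = endB n ε C) := by
  rw [adj_iff] at h
  obtain ⟨hne, h | h⟩ := h
  · -- direction GRel w z
    rcases w with u | ⟨m, j | ⟨i, x⟩⟩ | ⟨m, c⟩
    · obtain ⟨hC, hu, ht⟩ := posA2 n ε hw
      subst hC; subst ht
      rcases z with u' | ⟨m', j' | ⟨i', x'⟩⟩ | ⟨m', c'⟩ <;>
        simp only [GRel, and_false, false_and, and_true, true_and] at h
      · -- z = inl u'
        rcases h with ⟨h1, _, _⟩ | ⟨h1, h2, h3⟩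
        · omega
        · refine Or.inl ⟨(u : ℕ) - (n + 2) + 1, ?_, Or.inl rfl⟩
          simp only [pos]
          rw [if_neg (by omega)]
          simp only [Sum.inr.injEq, Prod.mk.injEq, true_and]
          omega
      · -- z = k_1(0)
        obtain ⟨h1, rfl, h3⟩ := h
        refine Or.inr (Or.inr ⟨by simp only [clen]; omega, ?_⟩)
        simp only [endB]
        simp only [Sum.inr.injEq, Sum.inl.injEq, Prod.mk.injEq, Fin.ext_iff, true_and]
        omega
    · exact (posB2 n ε hw).elim
    · obtain ⟨hC, hx, ht⟩ := posC2 n ε hw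
      subst hC; subst ht
      rcases z with u' | ⟨m', j' | ⟨i', x'⟩⟩ | ⟨m', c'⟩ <;>
        simp only [GRel, TRel, and_false, false_and, and_true, true_and] at h
      · -- z = k_{i+1}(m)
        obtain ⟨rfl, h1, h2⟩ := h
        refine Or.inr (Or.inr ⟨by simp only [clen]; omega, ?_⟩)
        simp only [endB]
        rw [dif_pos i.isLt]
        simp only [Sum.inr.injEq, Sum.inl.injEq, Prod.mk.injEq, Fin.ext_iff, true_and]
        omega
      · -- z = next tail vertex
        obtain ⟨rfl, h2⟩ := h
        rcases h2 with ⟨rfl, h3 | h3⟩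
        · omega
        · refine Or.inl ⟨(x' : ℕ) - (n + 2), ?_, Or.inl (by omega)⟩
          simp only [pos]
          rw [if_neg (by omega)]
    · obtain ⟨hC, ht⟩ := posD2 n ε hw
      subst hC; subst ht
      rcases z with u' | ⟨m', j' | ⟨i', x'⟩⟩ | ⟨m', c'⟩ <;>
        simp only [GRel, and_false, false_and, and_true, true_and] at h
      · -- z = k_1(m+1)
        obtain ⟨h1, rfl, h3⟩ := h
        have hcb := c.isLt
        refine Or.inr (Or.inr ⟨by simp only [clen]; omega, ?_⟩)
        simp only [endB]
        simp only [Sum.inr.injEq, Sum.inl.injEq, Prod.mk.injEq, Fin.ext_iff, true_and]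
        omega
      · -- z = next highway vertex
        obtain ⟨rfl, h2⟩ := h
        refine Or.inl ⟨(c' : ℕ) + 1, ?_, Or.inl (by omega)⟩
        simp only [pos]
  · -- direction GRel z w
    rcases w with u | ⟨m, j | ⟨i, x⟩⟩ | ⟨m, c⟩
    · obtain ⟨hC, hu, ht⟩ := posA2 n ε hw
      subst hC; subst ht
      rcases z with u' | ⟨m', j' | ⟨i', x'⟩⟩ | ⟨m', c'⟩ <;>
        simp only [GRel, and_false, false_and, and_true, true_and] at h
      rcases h with ⟨_, h1, _⟩ | ⟨h1, h2, h3⟩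
      · omega
      · by_cases hcase : (u' : ℕ) ≤ n + 2
        · refine Or.inr (Or.inl ⟨by omega, ?_⟩)
          simp only [endA]
          exact congrArg Sum.inl (Fin.ext (le_antisymm hcase h1))
        · refine Or.inl ⟨(u' : ℕ) - (n + 2), ?_, Or.inr (by omega)⟩
          simp only [pos]
          rw [if_neg (by omega)]
    · exact (posB2 n ε hw).elim
    · obtain ⟨hC, hx, ht⟩ := posC2 n ε hw
      subst hC; subst ht
      rcases z with u' | ⟨m', j' | ⟨i', x'⟩⟩ | ⟨m', c'⟩ <;>
        simp only [GRel, TRel, and_false, false_and, and_true, true_and] at h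
      obtain ⟨rfl, hii, h3 | h3⟩ := h
      · omega
      · obtain ⟨h4, h5, h6⟩ := h3
        have hvi : (i' : ℕ) = (i : ℕ) := congrArg Fin.val hii
        by_cases hcase : (x' : ℕ) ≤ n + 2
        · refine Or.inr (Or.inl ⟨by omega, ?_⟩)
          simp only [endA]
          rw [dif_pos i.isLt]
          simp only [Sum.inr.injEq, Sum.inl.injEq, Prod.mk.injEq, Fin.ext_iff, true_and]
          omega
        · refine Or.inl ⟨(x' : ℕ) - (n + 2), ?_, Or.inr (by omega)⟩
          simp only [pos]
          rw [if_neg (by omega), hii]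
    · obtain ⟨hC, ht⟩ := posD2 n ε hw
      subst hC; subst ht
      rcases z with u' | ⟨m', j' | ⟨i', x'⟩⟩ | ⟨m', c'⟩ <;>
        simp only [GRel, and_false, false_and, and_true, true_and] at h
      · -- z = k_{n+2}(m)
        obtain ⟨h1, rfl, h3⟩ := h
        refine Or.inr (Or.inl ⟨by omega, ?_⟩)
        simp only [endA]
        simp only [Sum.inr.injEq, Sum.inl.injEq, Prod.mk.injEq, Fin.ext_iff, true_and]
        omega
      · -- z = previous highway vertex
        obtain ⟨rfl, h2⟩ := h
        refine Or.inl ⟨(c' : ℕ) + 1, ?_, Or.inr (by omega)⟩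
        simp only [pos]

lemma nbr_desc {w z : GV n ε} {C t} (hw : pos n ε w = .inr (C, t))
    (h : (GEps n ε).Adj w z) :
    (pos n ε z = .inr (C, t + 1) ∧ t + 1 ≤ clen n ε C - 1) ∨
    (2 ≤ t ∧ pos n ε z = .inr (C, t - 1)) ∨
    (t = 1 ∧ z = endA n ε C) ∨ (t = clen n ε C - 1 ∧ z = endB n ε C) := by
  rcases interior_adj n ε hw h with ⟨t', hp, ht' | ht'⟩ | hc | hc
  · subst ht'; exact Or.inl ⟨hp, (pos_bounds n ε hp).2⟩
  · have hb := pos_bounds n ε hp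
    have he : t' = t - 1 := by omega
    rw [he] at hp
    exact Or.inr (Or.inl ⟨by omega, hp⟩)
  · exact Or.inr (Or.inr (Or.inl hc))
  · exact Or.inr (Or.inr (Or.inr hc))

lemma deg_two {w z1 z2 z3 : GV n ε} {C t} (hw : pos n ε w = .inr (C, t))
    (h1 : (GEps n ε).Adj w z1) (h2 : (GEps n ε).Adj w z2) (h3 : (GEps n ε).Adj w z3) :
    z1 = z2 ∨ z1 = z3 ∨ z2 = z3 := by
  rcases nbr_desc n ε hw h1 with ⟨p1, b1⟩ | ⟨b1, p1⟩ | ⟨b1, e1⟩ | ⟨b1, e1⟩ <;>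
  rcases nbr_desc n ε hw h2 with ⟨p2, b2⟩ | ⟨b2, p2⟩ | ⟨b2, e2⟩ | ⟨b2, e2⟩ <;>
  rcases nbr_desc n ε hw h3 with ⟨p3, b3⟩ | ⟨b3, p3⟩ | ⟨b3, e3⟩ | ⟨b3, e3⟩ <;>
    first
      | (left; exact pos_inj n ε p1 p2)
      | (right; left; exact pos_inj n ε p1 p3)
      | (right; right; exact pos_inj n ε p2 p3)
      | (left; exact e1.trans e2.symm)
      | (right; left; exact e1.trans e3.symm)
      | (right; right; exact e2.trans e3.symm)
      | omega

lemma clique_adj_rel (hn : 1 ≤ n) {w z : GV n ε} {Q Q'} (hw : pos n ε w = .inl Q)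
    (hz : pos n ε z = .inl Q') (h : GRel n ε w z) : Q = Q' := by
  rcases w with u | ⟨m, j | ⟨i, x⟩⟩ | ⟨m, c⟩
  · obtain ⟨hQ, hu⟩ := posA1 n ε hw
    rcases z with u' | ⟨m', j' | ⟨i', x'⟩⟩ | ⟨m', c'⟩ <;>
      simp only [GRel, and_false, false_and, and_true, true_and] at h
    · obtain ⟨hQ', hu'⟩ := posA1 n ε hz
      rw [hQ, hQ']
    · exact absurd h.1 (by omega)
  · have hQ := posB1 n ε hw
    rcases z with u' | ⟨m', j' | ⟨i', x'⟩⟩ | ⟨m', c'⟩ <;>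
      simp only [GRel, TRel, and_false, false_and, and_true, true_and] at h
    · have hQ' := posB1 n ε hz
      rw [hQ, hQ', h.1]
    · exact (posD1 n ε hz).elim
  · obtain ⟨hQ, hx⟩ := posC1 n ε hw
    rcases z with u' | ⟨m', j' | ⟨i', x'⟩⟩ | ⟨m', c'⟩ <;>
      simp only [GRel, TRel, and_false, false_and, and_true, true_and] at h
    · -- z = k_{i+1}: needs x = 2n+2, impossible
      exact absurd h.2.1 (by omega)
    · obtain ⟨hQ', hx'⟩ := posC1 n ε hz
      obtain ⟨rfl, hii, hc | hc⟩ := h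
      · rw [hQ, hQ', hii]
      · exact absurd hc.2.2 (by omega)
  · exact (posD1 n ε hw).elim

lemma clique_adj (hn : 1 ≤ n) {w z : GV n ε} {Q Q'} (hw : pos n ε w = .inl Q)
    (hz : pos n ε z = .inl Q') (h : (GEps n ε).Adj w z) : Q = Q' := by
  rw [adj_iff] at h
  obtain ⟨hne, h | h⟩ := h
  · exact clique_adj_rel n ε hn hw hz h
  · exact (clique_adj_rel n ε hn hz hw h).symm

lemma sig_eq {m m' : ℕ} {c : Fin (n + (ε m).toNat)} {c' : Fin (n + (ε m').toNat)}
    (hm : m = m') (hc : (c : ℕ) = (c' : ℕ)) :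
    (⟨m, c⟩ : (k : ℕ) × Fin (n + (ε k).toNat)) = ⟨m', c'⟩ := by
  subst hm; exact congrArg _ (Fin.ext hc)

lemma dcl_nbr {w z : GV n ε} (hw : pos n ε w = .inl .dcl) (h : (GEps n ε).Adj w z) :
    pos n ε z = .inl .dcl ∨ z = (.inl ⟨n + 3, by omega⟩ : GV n ε) := by
  rw [adj_iff] at h
  obtain ⟨hne, h | h⟩ := h
  · rcases w with u | ⟨m, j | ⟨i, x⟩⟩ | ⟨m, c⟩
    · obtain ⟨_, hu⟩ := posA1 n ε hw
      rcases z with u' | ⟨m', j' | ⟨i', x'⟩⟩ | ⟨m', c'⟩ <;>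
        simp only [GRel, and_false, false_and, and_true, true_and] at h
      · rcases h with ⟨h1, h2, h3⟩ | ⟨h1, h2, h3⟩
        · left; simp only [pos]; rw [if_pos (by omega)]
        · right
          exact congrArg Sum.inl (Fin.ext (show (u' : ℕ) = n + 3 by omega))
      · exact absurd h.1 (by omega)
    · exact absurd (posB1 n ε hw) (by simp)
    · exact absurd (posC1 n ε hw).1 (by simp)
    · exact (posD1 n ε hw).elim
  · rcases w with u | ⟨m, j | ⟨i, x⟩⟩ | ⟨m, c⟩
    · obtain ⟨_, hu⟩ := posA1 n ε hw
      rcases z with u' | ⟨m', j' | ⟨i', x'⟩⟩ | ⟨m', c'⟩ <;>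
        simp only [GRel, and_false, false_and, and_true, true_and] at h
      rcases h with ⟨h1, h2, h3⟩ | ⟨h1, h2, h3⟩
      · left; simp only [pos]; rw [if_pos (by omega)]
      · exact absurd h3 (by omega)
    · exact absurd (posB1 n ε hw) (by simp)
    · exact absurd (posC1 n ε hw).1 (by simp)
    · exact (posD1 n ε hw).elim

lemma ecl_nbr (hn : 1 ≤ n) {m : ℕ} {i : Fin n} {x : Fin (2 * n + 3)} (hx : (x : ℕ) ≤ n + 2)
    {z : GV n ε} (h : (GEps n ε).Adj (.inr (.inl (m, .inr (i, x)))) z) :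
    pos n ε z = .inl (.ecl m ↑i) ∨
    z = (.inr (.inl (m, .inr (i, ⟨n + 3, by omega⟩))) : GV n ε) := by
  rw [adj_iff] at h
  obtain ⟨hne, h | h⟩ := h
  · rcases z with u' | ⟨m', j' | ⟨i', x'⟩⟩ | ⟨m', c'⟩ <;>
      simp only [GRel, TRel, and_false, false_and, and_true, true_and] at h
    · exact absurd h.2.1 (by omega)
    · obtain ⟨rfl, rfl, hc | hc⟩ := h
      · left; simp only [pos]; rw [if_pos (by omega)]
      · right
        refine congrArg (fun a => Sum.inr (Sum.inl (m, Sum.inr (i, a)))) (Fin.ext ?_)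
        simp only [Fin.ext_iff]
        omega
  · rcases z with u' | ⟨m', j' | ⟨i', x'⟩⟩ | ⟨m', c'⟩ <;>
      simp only [GRel, TRel, and_false, false_and, and_true, true_and] at h
    obtain ⟨rfl, hii, hc | hc⟩ := h
    · left; simp only [pos]; rw [if_pos (by omega), hii]
    · exact absurd hc.2.2 (by omega)

/-- The unique non-clique neighbor of a vertex of a drive-through clique. -/
def tgate (hn : 1 ≤ n) (m : ℕ) (j : Fin (n + 2)) : GV n ε :=
  if h0 : (j : ℕ) = 0 then
    (if m = 0 then .inl ⟨2 * n + 3, by omega⟩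
     else .inr (.inr ⟨m - 1, ⟨n + (ε (m - 1)).toNat - 1, by omega⟩⟩))
  else if hL : (j : ℕ) = n + 1 then .inr (.inr ⟨m, ⟨0, by omega⟩⟩)
  else .inr (.inl (m, .inr (⟨(j : ℕ) - 1, by have := j.isLt; omega⟩, ⟨2 * n + 2, by omega⟩)))

lemma tcl_nbr (hn : 1 ≤ n) {m : ℕ} (j : Fin (n + 2)) {z : GV n ε}
    (h : (GEps n ε).Adj (.inr (.inl (m, .inl j))) z) :
    pos n ε z = .inl (.tcl m) ∨ z = tgate n ε hn m j := by
  rw [adj_iff] at h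
  obtain ⟨hne, h | h⟩ := h
  · rcases z with u' | ⟨m', j' | ⟨i', x'⟩⟩ | ⟨m', c'⟩ <;>
      simp only [GRel, TRel, and_false, false_and, and_true, true_and] at h
    · obtain ⟨rfl, _⟩ := h
      left; simp only [pos]
    · -- z = first highway vertex of H(m)
      obtain ⟨h1, hmq, h3⟩ := h
      right
      rw [tgate, dif_neg (by omega), dif_pos h1]
      exact congrArg (fun a => (Sum.inr (Sum.inr a) : GV n ε))
        (sig_eq n ε hmq (show (c' : ℕ) = 0 by omega))
  · rcases z with u' | ⟨m', j' | ⟨i', x'⟩⟩ | ⟨m', c'⟩ <;>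
      simp only [GRel, TRel, and_false, false_and, and_true, true_and] at h
    · -- z = top of the D tail
      obtain ⟨h1, rfl, h3⟩ := h
      right
      rw [tgate, dif_pos h3, if_pos rfl]
      exact congrArg Sum.inl (Fin.ext (show (u' : ℕ) = 2 * n + 3 by omega))
    · obtain ⟨rfl, _⟩ := h
      left; simp only [pos]
    · -- z = p_n of dead end j-1
      obtain ⟨hmq, h2, h3⟩ := h
      right
      have hii := i'.isLt
      rw [tgate, dif_neg (by omega), dif_neg (by omega)]
      have e1 : i' = (⟨(j : ℕ) - 1, by have := j.isLt; omega⟩ : Fin n) :=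
        Fin.ext (show (i' : ℕ) = (j : ℕ) - 1 by omega)
      have e2 : x' = (⟨2 * n + 2, by omega⟩ : Fin (2 * n + 3)) :=
        Fin.ext (show (x' : ℕ) = 2 * n + 2 by omega)
      rw [hmq]
      exact congrArg (fun a => (Sum.inr (Sum.inl (m, Sum.inr a)) : GV n ε))
        (by simp only [Prod.mk.injEq]; exact ⟨e1, e2⟩)
    · -- z = last highway vertex of H(m-1)
      obtain ⟨h1, hmq, h3⟩ := h
      right
      rw [tgate, dif_pos h3, if_neg (by omega)]
      refine congrArg (fun a => (Sum.inr (Sum.inr a) : GV n ε)) ?_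
      refine sig_eq n ε (by omega) ?_
      have hm1 : m - 1 = m' := by omega
      show (c' : ℕ) = n + (ε (m - 1)).toNat - 1
      rw [hm1]
      omega

lemma confine (hn : 1 ≤ n) (y : ℕ → GV n ε)
    (hy : ∀ s, s < n → (GEps n ε).Adj (y s) (y (s + 1)))
    (hinj : ∀ s s', s ≤ n → s' ≤ n → y s = y s' → s = s')
    {Q Q'} (h0 : pos n ε (y 0) = .inl Q) (hN : pos n ε (y n) = .inl Q') :
    ∀ s, s ≤ n → pos n ε (y s) = .inl Q := by
  have hclen : ∀ C, n + 1 ≤ clen n ε C := clen_ge n ε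
  have run : ∀ j C t, j + 1 ≤ n → pos n ε (y j) = .inl Q →
      pos n ε (y (j + 1)) = .inr (C, t) → False := by
    intro j C t hj hprev hcur
    have hadj : (GEps n ε).Adj (y (j + 1)) (y j) := (hy j (by omega)).symm
    rcases interior_adj n ε hcur hadj with ⟨t', hp, _⟩ | ⟨ht1, hA⟩ | ⟨htL, hB⟩
    · rw [hprev] at hp; exact absurd hp (by simp)
    · -- entered from end A, position 1; walk up
      subst ht1
      have claim : ∀ s, j + 1 + s ≤ n → pos n ε (y (j + 1 + s)) = .inr (C, 1 + s) := by
        intro s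
        induction s using Nat.strong_induction_on with
        | _ s IH =>
          intro hs
          cases s with
          | zero => exact hcur
          | succ s' =>
            have hp2 := IH s' (by omega) (by omega)
            have hadj2 : (GEps n ε).Adj (y (j + 1 + s')) (y (j + 1 + s' + 1)) :=
              hy (j + 1 + s') (by omega)
            rcases nbr_desc n ε hp2 hadj2 with ⟨hp, hb⟩ | ⟨hb, hp⟩ | ⟨hb, he⟩ | ⟨hb, he⟩
            · exact hp
            · -- going back down: must equal the vertex two steps ago
              cases s' with
              | zero => exact absurd hb (by omega)
              | succ s'' =>
                have hpp := IH s'' (by omega) (by omega)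
                have hq : 1 + (s'' + 1) - 1 = 1 + s'' := by omega
                rw [hq] at hp
                have := hinj _ _ (by omega) (by omega) (pos_inj n ε hp hpp)
                omega
            · -- back to end A: revisits y j
              have hs0 : s' = 0 := by omega
              subst hs0
              have := hinj _ _ (by omega) (by omega) (he.trans hA.symm)
              omega
            · -- reached end B: too far
              have := hclen C
              omega
      have hfin := claim (n - (j + 1)) (by omega)
      have hidx : j + 1 + (n - (j + 1)) = n := by omega
      rw [hidx] at hfin
      rw [hN] at hfin
      exact absurd hfin (by simp)
    · -- entered from end B, position clen - 1; walk down
      have hb0 := pos_bounds n ε hcur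
      have claim : ∀ s, j + 1 + s ≤ n →
          pos n ε (y (j + 1 + s)) = .inr (C, t - s) ∧ s < t := by
        intro s
        induction s using Nat.strong_induction_on with
        | _ s IH =>
          intro hs
          cases s with
          | zero => exact ⟨hcur, by omega⟩
          | succ s' =>
            obtain ⟨hp2, hlt⟩ := IH s' (by omega) (by omega)
            have hadj2 : (GEps n ε).Adj (y (j + 1 + s')) (y (j + 1 + s' + 1)) :=
              hy (j + 1 + s') (by omega)
            rcases nbr_desc n ε hp2 hadj2 with ⟨hp, hb⟩ | ⟨hb, hp⟩ | ⟨hb, he⟩ | ⟨hb, he⟩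
            · -- going back up
              cases s' with
              | zero =>
                have := hclen C
                omega
              | succ s'' =>
                obtain ⟨hpp, _⟩ := IH s'' (by omega) (by omega)
                have hq : t - (s'' + 1) + 1 = t - s'' := by omega
                rw [hq] at hp
                have := hinj _ _ (by omega) (by omega) (pos_inj n ε hp hpp)
                omega
            · have hbnd := pos_bounds n ε hp
              have hq : t - s' - 1 = t - (s' + 1) := by omega
              rw [hq] at hp
              exact ⟨hp, by omega⟩
            · -- reached end A: too far
              have := hclen C
              omega
            · -- back to end B: revisits y j
              have hs0 : s' = 0 := by omega
              subst hs0
              have := hinj _ _ (by omega) (by omega) (he.trans hB.symm)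
              omega
      obtain ⟨hfin, _⟩ := claim (n - (j + 1)) (by omega)
      have hidx : j + 1 + (n - (j + 1)) = n := by omega
      rw [hidx] at hfin
      rw [hN] at hfin
      exact absurd hfin (by simp)
  intro s
  induction s with
  | zero => exact fun _ => h0
  | succ s IH =>
    intro hs
    have hq := IH (by omega)
    have hadj := hy s (by omega)
    rcases hps : pos n ε (y (s + 1)) with Q'' | ⟨C, t⟩
    · have hQQ : Q = Q'' := clique_adj n ε hn hq hps hadj
      exact congrArg Sum.inl hQQ.symm
    · exact (run s C t (by omega) hq hps).elim

lemma pigeon {Q : CId} {N k : ℕ} (y z : ℕ → GV n ε)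
    (hinj : ∀ s s', s ≤ n → s' ≤ n → y s = y s' → s = s')
    (hall : ∀ s, s ≤ n → pos n ε (y s) = .inl Q)
    (hz : ∀ j, j < k → pos n ε (z j) = .inl Q)
    (hzy : ∀ j, j < k → ∀ s, s ≤ n → z j ≠ y s)
    (hzz : ∀ j j', j < k → j' < k → z j = z j' → j = j')
    (hN : ∀ w : GV n ε, pos n ε w = .inl Q → cidx n ε w < N)
    (hcard : N < n + 1 + k) : False := by
  let w : ℕ → GV n ε := fun s => if s ≤ n then y s else z (s - (n + 1))
  have hwpos : ∀ s, s < n + 1 + k → pos n ε (w s) = .inl Q := by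
    intro s hs
    simp only [w]; split
    · exact hall s (by omega)
    · exact hz _ (by omega)
  have hwinj : ∀ s s', s < n + 1 + k → s' < n + 1 + k → w s = w s' → s = s' := by
    intro s s' hs hs' h
    simp only [w] at h
    split at h <;> split at h
    · exact hinj _ _ (by omega) (by omega) h
    · exact absurd h.symm (hzy _ (by omega) _ (by omega))
    · exact absurd h (hzy _ (by omega) _ (by omega))
    · have := hzz _ _ (by omega) (by omega) h; omega
  let g : Fin (n + 1 + k) → Fin N := fun s => ⟨cidx n ε (w s), hN _ (hwpos s s.isLt)⟩
  have hg : Function.Injective g := by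
    intro s s' hss
    have hval : cidx n ε (w (s : ℕ)) = cidx n ε (w (s' : ℕ)) := congrArg Fin.val hss
    have heq := cidx_inj n ε (hwpos s s.isLt) (hwpos s' s'.isLt) hval
    exact Fin.ext (hwinj _ _ s.isLt s'.isLt heq)
  have hcard2 := Fintype.card_le_of_injective g hg
  simp only [Fintype.card_fin] at hcard2
  omega

lemma pos_tcl_inv {w : GV n ε} {m : ℕ} (h : pos n ε w = .inl (.tcl m)) :
    ∃ j : Fin (n + 2), w = .inr (.inl (m, .inl j)) := by
  rcases w with u | ⟨m', j | ⟨i, x⟩⟩ | ⟨m', c⟩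
  · exact absurd (posA1 n ε h).1 (by simp)
  · have hQ := posB1 n ε h
    simp only [CId.tcl.injEq] at hQ
    subst hQ
    exact ⟨j, rfl⟩
  · exact absurd (posC1 n ε h).1 (by simp)
  · exact (posD1 n ε h).elim

lemma pos_ecl_inv {w : GV n ε} {m i0 : ℕ} (h : pos n ε w = .inl (.ecl m i0)) :
    ∃ (i : Fin n) (x : Fin (2 * n + 3)),
      (i : ℕ) = i0 ∧ (x : ℕ) ≤ n + 2 ∧ w = .inr (.inl (m, .inr (i, x))) := by
  rcases w with u | ⟨m', j | ⟨i, x⟩⟩ | ⟨m', c⟩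
  · exact absurd (posA1 n ε h).1 (by simp)
  · exact absurd (posB1 n ε h) (by simp)
  · obtain ⟨hQ, hx⟩ := posC1 n ε h
    simp only [CId.ecl.injEq] at hQ
    obtain ⟨rfl, hi⟩ := hQ
    exact ⟨i, x, by omega, hx, rfl⟩
  · exact (posD1 n ε h).elim

end BFree





open BFree in
/-- For every `n ≥ 1` and every `ε ∈ 2^ω`, the graph `G_ε` is `B_n`-free. -/
theorem gEps_bridgeFree (n : ℕ) (hn : 1 ≤ n) (ε : ℕ → Bool) :
    GraphFree (Bridge n) (GEps n ε) := by
  rintro ⟨f, hf⟩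
  have badj : ∀ (a b : Fin (n + 5)), a ≠ b →
      (((a : ℕ) = 0 ∧ (b : ℕ) = 2) ∨ ((a : ℕ) = 1 ∧ (b : ℕ) = 2) ∨
       (2 ≤ (a : ℕ) ∧ (a : ℕ) < n + 2 ∧ (b : ℕ) = (a : ℕ) + 1) ∨
       ((a : ℕ) = n + 2 ∧ (b : ℕ) = n + 3) ∨ ((a : ℕ) = n + 2 ∧ (b : ℕ) = n + 4)) →
      (Bridge n).Adj a b := by
    intro a b hne h
    exact (SimpleGraph.fromRel_adj _ a b).mpr ⟨hne, Or.inl h⟩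
  set y : ℕ → GV n ε := fun s => f ⟨min s n + 2, by omega⟩ with hydef
  have hyadj : ∀ s, s < n → (GEps n ε).Adj (y s) (y (s + 1)) := by
    intro s hs
    exact f.map_adj (badj _ _
      (Fin.ne_of_val_ne (show min s n + 2 ≠ min (s + 1) n + 2 by omega))
      (Or.inr (Or.inr (Or.inl ⟨show 2 ≤ min s n + 2 by omega,
        show min s n + 2 < n + 2 by omega,
        show min (s + 1) n + 2 = min s n + 2 + 1 by omega⟩))))
  have hinjy : ∀ s s', s ≤ n → s' ≤ n → y s = y s' → s = s' := by
    intro s s' hs hs' h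
    have hval : min s n + 2 = min s' n + 2 := congrArg Fin.val (hf h)
    omega
  have hd : ∀ (a b : Fin (n + 5)), (a : ℕ) ≠ (b : ℕ) → f a ≠ f b :=
    fun a b hab h => hab (congrArg Fin.val (hf h))
  have hAa : (GEps n ε).Adj (y 0) (f ⟨0, by omega⟩) :=
    (f.map_adj (badj ⟨0, by omega⟩ ⟨min 0 n + 2, by omega⟩
      (Fin.ne_of_val_ne (show (0 : ℕ) ≠ min 0 n + 2 by omega))
      (Or.inl ⟨rfl, show min 0 n + 2 = 2 by omega⟩))).symm
  have hAb : (GEps n ε).Adj (y 0) (f ⟨1, by omega⟩) :=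
    (f.map_adj (badj ⟨1, by omega⟩ ⟨min 0 n + 2, by omega⟩
      (Fin.ne_of_val_ne (show (1 : ℕ) ≠ min 0 n + 2 by omega))
      (Or.inr (Or.inl ⟨rfl, show min 0 n + 2 = 2 by omega⟩)))).symm
  have hA1 : (GEps n ε).Adj (y 0) (y 1) := hyadj 0 hn
  have hDd : (GEps n ε).Adj (y n) (f ⟨n + 3, by omega⟩) :=
    f.map_adj (badj ⟨min n n + 2, by omega⟩ ⟨n + 3, by omega⟩
      (Fin.ne_of_val_ne (show min n n + 2 ≠ n + 3 by omega))
      (Or.inr (Or.inr (Or.inr (Or.inl ⟨show min n n + 2 = n + 2 by omega, rfl⟩)))))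
  have hDe : (GEps n ε).Adj (y n) (f ⟨n + 4, by omega⟩) :=
    f.map_adj (badj ⟨min n n + 2, by omega⟩ ⟨n + 4, by omega⟩
      (Fin.ne_of_val_ne (show min n n + 2 ≠ n + 4 by omega))
      (Or.inr (Or.inr (Or.inr (Or.inr ⟨show min n n + 2 = n + 2 by omega, rfl⟩)))))
  have hD1 : (GEps n ε).Adj (y n) (y (n - 1)) := by
    have h := (hyadj (n - 1) (by omega)).symm
    rw [show n - 1 + 1 = n by omega] at h
    exact h
  -- both endpoints of the path lie in cliques
  have hu : ∃ Qu, pos n ε (y 0) = .inl Qu := by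
    rcases hp : pos n ε (y 0) with q | ⟨C, t⟩
    · exact ⟨q, rfl⟩
    · exfalso
      rcases deg_two n ε hp hAa hAb hA1 with h | h | h
      · exact hd _ _ (show (0 : ℕ) ≠ 1 by omega) h
      · exact hd _ _ (show (0 : ℕ) ≠ min 1 n + 2 by omega) h
      · exact hd _ _ (show (1 : ℕ) ≠ min 1 n + 2 by omega) h
  obtain ⟨Qu, hu⟩ := hu
  have hv : ∃ Qv, pos n ε (y n) = .inl Qv := by
    rcases hp : pos n ε (y n) with q | ⟨C, t⟩
    · exact ⟨q, rfl⟩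
    · exfalso
      rcases deg_two n ε hp hDd hDe hD1 with h | h | h
      · exact hd _ _ (show (n + 3 : ℕ) ≠ n + 4 by omega) h
      · exact hd _ _ (show (n + 3 : ℕ) ≠ min (n - 1) n + 2 by omega) h
      · exact hd _ _ (show (n + 4 : ℕ) ≠ min (n - 1) n + 2 by omega) h
  obtain ⟨Qv, hv⟩ := hv
  have hall := confine n ε hn y hyadj hinjy hu hv
  have hvQ : pos n ε (y n) = .inl Qu := hall n le_rfl
  -- the four outer vertices avoid the path
  have houter : ∀ (kk : ℕ) (hk : kk < n + 5), (kk = 0 ∨ kk = 1 ∨ kk = n + 3 ∨ kk = n + 4) →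
      ∀ s, s ≤ n → f ⟨kk, hk⟩ ≠ y s := by
    intro kk hk hcase s hs
    exact hd _ _ (show kk ≠ min s n + 2 by omega)
  rcases Qu with _ | m | ⟨m, i0⟩
  · -- the dead end D^ε clique
    have Ha := dcl_nbr n ε hu hAa
    have Hb := dcl_nbr n ε hu hAb
    have Hd := dcl_nbr n ε hvQ hDd
    have He := dcl_nbr n ε hvQ hDe
    have fin3 : ∀ z1 z2 z3 : GV n ε,
        pos n ε z1 = .inl .dcl → pos n ε z2 = .inl .dcl → pos n ε z3 = .inl .dcl →
        z1 ≠ z2 → z1 ≠ z3 → z2 ≠ z3 →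
        (∀ s, s ≤ n → z1 ≠ y s) → (∀ s, s ≤ n → z2 ≠ y s) → (∀ s, s ≤ n → z3 ≠ y s) →
        False := by
      intro z1 z2 z3 p1 p2 p3 d12 d13 d23 e1 e2 e3
      refine pigeon n ε (N := n + 3) (k := 3) y
        (fun j => if j = 0 then z1 else if j = 1 then z2 else z3) hinjy hall
        ?_ ?_ ?_ (fun w hw => cidx_lt_dcl n ε hw) (by omega)
      · intro j hj
        interval_cases j
        · exact p1
        · exact p2
        · exact p3
      · intro j hj s hs
        interval_cases j
        · exact e1 s hs
        · exact e2 s hs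
        · exact e3 s hs
      · intro j j' hj hj' h
        interval_cases j <;> interval_cases j' <;>
          first
            | rfl
            | exact absurd h d12
            | exact absurd h d13
            | exact absurd h d23
            | exact absurd h.symm d12
            | exact absurd h.symm d13
            | exact absurd h.symm d23
    have dab := hd ⟨0, by omega⟩ ⟨1, by omega⟩ (show (0 : ℕ) ≠ 1 by omega)
    have dad := hd ⟨0, by omega⟩ ⟨n + 3, by omega⟩ (show (0 : ℕ) ≠ n + 3 by omega)
    have dae := hd ⟨0, by omega⟩ ⟨n + 4, by omega⟩ (show (0 : ℕ) ≠ n + 4 by omega)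
    have dbd := hd ⟨1, by omega⟩ ⟨n + 3, by omega⟩ (show (1 : ℕ) ≠ n + 3 by omega)
    have dbe := hd ⟨1, by omega⟩ ⟨n + 4, by omega⟩ (show (1 : ℕ) ≠ n + 4 by omega)
    have dde := hd ⟨n + 3, by omega⟩ ⟨n + 4, by omega⟩ (show (n + 3 : ℕ) ≠ n + 4 by omega)
    have ea := houter 0 (by omega) (by omega)
    have eb := houter 1 (by omega) (by omega)
    have ed := houter (n + 3) (by omega) (by omega)
    have ee := houter (n + 4) (by omega) (by omega)
    rcases Ha with ha | ha <;> rcases Hb with hb | hb <;>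
      rcases Hd with hd' | hd' <;> rcases He with he' | he'
    · exact fin3 _ _ _ ha hb hd' dab dad dbd ea eb ed
    · exact fin3 _ _ _ ha hb hd' dab dad dbd ea eb ed
    · exact fin3 _ _ _ ha hb he' dab dae dbe ea eb ee
    · exact dde (hd'.trans he'.symm)
    · exact fin3 _ _ _ ha hd' he' dad dae dde ea ed ee
    · exact dbe (hb.trans he'.symm)
    · exact dbd (hb.trans hd'.symm)
    · exact dbd (hb.trans hd'.symm)
    · exact fin3 _ _ _ hb hd' he' dbd dbe dde eb ed ee
    · exact dae (ha.trans he'.symm)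
    · exact dad (ha.trans hd'.symm)
    · exact dad (ha.trans hd'.symm)
    · exact dab (ha.trans hb.symm)
    · exact dab (ha.trans hb.symm)
    · exact dab (ha.trans hb.symm)
    · exact dab (ha.trans hb.symm)
  · -- a drive-through clique
    obtain ⟨ju, hju⟩ := pos_tcl_inv n ε hu
    obtain ⟨jv, hjv⟩ := pos_tcl_inv n ε hvQ
    rw [hju] at hAa hAb
    rw [hjv] at hDd hDe
    have Ha := tcl_nbr n ε hn ju hAa
    have Hb := tcl_nbr n ε hn ju hAb
    have Hd := tcl_nbr n ε hn jv hDd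
    have He := tcl_nbr n ε hn jv hDe
    have fin2 : ∀ z1 z2 : GV n ε,
        pos n ε z1 = .inl (.tcl m) → pos n ε z2 = .inl (.tcl m) → z1 ≠ z2 →
        (∀ s, s ≤ n → z1 ≠ y s) → (∀ s, s ≤ n → z2 ≠ y s) → False := by
      intro z1 z2 p1 p2 d12 e1 e2
      refine pigeon n ε (N := n + 2) (k := 2) y
        (fun j => if j = 0 then z1 else z2) hinjy hall
        ?_ ?_ ?_ (fun w hw => cidx_lt_tcl n ε hw) (by omega)
      · intro j hj
        interval_cases j
        · exact p1
        · exact p2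
      · intro j hj s hs
        interval_cases j
        · exact e1 s hs
        · exact e2 s hs
      · intro j j' hj hj' h
        interval_cases j <;> interval_cases j' <;>
          first
            | rfl
            | exact absurd h d12
            | exact absurd h.symm d12
    have dab := hd ⟨0, by omega⟩ ⟨1, by omega⟩ (show (0 : ℕ) ≠ 1 by omega)
    have dad := hd ⟨0, by omega⟩ ⟨n + 3, by omega⟩ (show (0 : ℕ) ≠ n + 3 by omega)
    have dae := hd ⟨0, by omega⟩ ⟨n + 4, by omega⟩ (show (0 : ℕ) ≠ n + 4 by omega)
    have dbd := hd ⟨1, by omega⟩ ⟨n + 3, by omega⟩ (show (1 : ℕ) ≠ n + 3 by omega)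
    have dbe := hd ⟨1, by omega⟩ ⟨n + 4, by omega⟩ (show (1 : ℕ) ≠ n + 4 by omega)
    have dde := hd ⟨n + 3, by omega⟩ ⟨n + 4, by omega⟩ (show (n + 3 : ℕ) ≠ n + 4 by omega)
    have ea := houter 0 (by omega) (by omega)
    have eb := houter 1 (by omega) (by omega)
    have ed := houter (n + 3) (by omega) (by omega)
    have ee := houter (n + 4) (by omega) (by omega)
    rcases Ha with ha | ha <;> rcases Hb with hb | hb <;>
      rcases Hd with hd' | hd' <;> rcases He with he' | he'
    · exact fin2 _ _ ha hd' dad ea ed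
    · exact fin2 _ _ ha hd' dad ea ed
    · exact fin2 _ _ ha he' dae ea ee
    · exact dde (hd'.trans he'.symm)
    · exact fin2 _ _ ha hd' dad ea ed
    · exact fin2 _ _ ha hd' dad ea ed
    · exact fin2 _ _ ha he' dae ea ee
    · exact dde (hd'.trans he'.symm)
    · exact fin2 _ _ hb hd' dbd eb ed
    · exact fin2 _ _ hb hd' dbd eb ed
    · exact fin2 _ _ hb he' dbe eb ee
    · exact dde (hd'.trans he'.symm)
    · exact dab (ha.trans hb.symm)
    · exact dab (ha.trans hb.symm)
    · exact dab (ha.trans hb.symm)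
    · exact dab (ha.trans hb.symm)
  · -- a dead-end clique inside a drive through
    obtain ⟨iu, xu, hiu, hxu, hyu⟩ := pos_ecl_inv n ε hu
    obtain ⟨iv, xv, hiv, hxv, hyv⟩ := pos_ecl_inv n ε hvQ
    have hiuv : iu = iv := Fin.ext (by omega)
    subst hiuv
    rw [hyu] at hAa hAb
    rw [hyv] at hDd hDe
    have Ha := ecl_nbr n ε hn hxu hAa
    have Hb := ecl_nbr n ε hn hxu hAb
    have Hd := ecl_nbr n ε hn hxv hDd
    have He := ecl_nbr n ε hn hxv hDe
    rw [hiu] at Ha Hb Hd He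
    have fin3 : ∀ z1 z2 z3 : GV n ε,
        pos n ε z1 = .inl (.ecl m i0) → pos n ε z2 = .inl (.ecl m i0) →
        pos n ε z3 = .inl (.ecl m i0) →
        z1 ≠ z2 → z1 ≠ z3 → z2 ≠ z3 →
        (∀ s, s ≤ n → z1 ≠ y s) → (∀ s, s ≤ n → z2 ≠ y s) → (∀ s, s ≤ n → z3 ≠ y s) →
        False := by
      intro z1 z2 z3 p1 p2 p3 d12 d13 d23 e1 e2 e3
      refine pigeon n ε (N := n + 3) (k := 3) y
        (fun j => if j = 0 then z1 else if j = 1 then z2 else z3) hinjy hall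
        ?_ ?_ ?_ (fun w hw => cidx_lt_ecl n ε hw) (by omega)
      · intro j hj
        interval_cases j
        · exact p1
        · exact p2
        · exact p3
      · intro j hj s hs
        interval_cases j
        · exact e1 s hs
        · exact e2 s hs
        · exact e3 s hs
      · intro j j' hj hj' h
        interval_cases j <;> interval_cases j' <;>
          first
            | rfl
            | exact absurd h d12
            | exact absurd h d13
            | exact absurd h d23
            | exact absurd h.symm d12
            | exact absurd h.symm d13
            | exact absurd h.symm d23
    have dab := hd ⟨0, by omega⟩ ⟨1, by omega⟩ (show (0 : ℕ) ≠ 1 by omega)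
    have dad := hd ⟨0, by omega⟩ ⟨n + 3, by omega⟩ (show (0 : ℕ) ≠ n + 3 by omega)
    have dae := hd ⟨0, by omega⟩ ⟨n + 4, by omega⟩ (show (0 : ℕ) ≠ n + 4 by omega)
    have dbd := hd ⟨1, by omega⟩ ⟨n + 3, by omega⟩ (show (1 : ℕ) ≠ n + 3 by omega)
    have dbe := hd ⟨1, by omega⟩ ⟨n + 4, by omega⟩ (show (1 : ℕ) ≠ n + 4 by omega)
    have dde := hd ⟨n + 3, by omega⟩ ⟨n + 4, by omega⟩ (show (n + 3 : ℕ) ≠ n + 4 by omega)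
    have ea := houter 0 (by omega) (by omega)
    have eb := houter 1 (by omega) (by omega)
    have ed := houter (n + 3) (by omega) (by omega)
    have ee := houter (n + 4) (by omega) (by omega)
    rcases Ha with ha | ha <;> rcases Hb with hb | hb <;>
      rcases Hd with hd' | hd' <;> rcases He with he' | he'
    · exact fin3 _ _ _ ha hb hd' dab dad dbd ea eb ed
    · exact fin3 _ _ _ ha hb hd' dab dad dbd ea eb ed
    · exact fin3 _ _ _ ha hb he' dab dae dbe ea eb ee
    · exact dde (hd'.trans he'.symm)
    · exact fin3 _ _ _ ha hd' he' dad dae dde ea ed ee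
    · exact dbe (hb.trans he'.symm)
    · exact dbd (hb.trans hd'.symm)
    · exact dbd (hb.trans hd'.symm)
    · exact fin3 _ _ _ hb hd' he' dbd dbe dde eb ed ee
    · exact dae (ha.trans he'.symm)
    · exact dad (ha.trans hd'.symm)
    · exact dad (ha.trans hd'.symm)
    · exact dab (ha.trans hb.symm)
    · exact dab (ha.trans hb.symm)
    · exact dab (ha.trans hb.symm)
    · exact dab (ha.trans hb.symm)
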